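/- Let n > 1 be an integer and let G = F₂/ⁿF₂. The commutator u = [x₁ⁿ, x₂ⁿ] is a non-trivial element of the free group F₂ on x₁, x₂, and u is a 2-almost identity of G: for every pair (g₁,g₂) of elements generating G one has [g₁ⁿ, g₂ⁿ] = 1 in G. -/

import Mathlib

/-- The exponent sum of the generator `i` in a word of the free group `F₂ = F(a,b)`
(we take `a` = `FreeGroup.of 0`, `b` = `FreeGroup.of 1`). -/
def expSum (i : Fin 2) : FreeGroup (Fin 2) →* Multiplicative ℤ :=
  FreeGroup.lift (fun j => Multiplicative.ofAdd (if j = i then (1 : ℤ) else 0))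

/-- The set of all `n`-th powers `wⁿ` of elements `w ∈ F₂` such that the exponent sum of `a`
in `w` or the exponent sum of `b` in `w` is not divisible by `n`. -/
def nPowSet (n : ℕ) : Set (FreeGroup (Fin 2)) :=
  {x | ∃ w : FreeGroup (Fin 2),
    (¬ (n : ℤ) ∣ (expSum 0 w).toAdd ∨ ¬ (n : ℤ) ∣ (expSum 1 w).toAdd) ∧ x = w ^ n}

/-- `ⁿF₂`: the subgroup of `F₂` generated by `nPowSet n`. -/
def nF2 (n : ℕ) : Subgroup (FreeGroup (Fin 2)) := Subgroup.closure (nPowSet n)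

lemma expSum_conj (i : Fin 2) (g w : FreeGroup (Fin 2)) :
    expSum i (g * w * g⁻¹) = expSum i w := by
  rw [map_mul, map_mul, map_inv, mul_comm ((expSum i) g), mul_inv_cancel_right]

lemma conjugatesOfSet_nPowSet (n : ℕ) :
    Group.conjugatesOfSet (nPowSet n) = nPowSet n := by
  refine Set.Subset.antisymm ?_ Group.subset_conjugatesOfSet
  intro x hx
  rw [Group.mem_conjugatesOfSet_iff] at hx
  obtain ⟨a, ⟨w, hw, rfl⟩, hconj⟩ := hx
  obtain ⟨c, rfl⟩ := isConj_iff.1 hconj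
  exact ⟨c * w * c⁻¹, by simpa [expSum_conj] using hw, (conj_pow).symm⟩

/-- `ⁿF₂` is a normal subgroup of `F₂`. -/
instance nF2_normal (n : ℕ) : (nF2 n).Normal := by
  have h : nF2 n = Subgroup.normalClosure (nPowSet n) := by
    rw [nF2, Subgroup.normalClosure, conjugatesOfSet_nPowSet]
  rw [h]
  exact Subgroup.normalClosure_normal


open scoped commutatorElement

/-! The commutator `[aⁿ, bⁿ]` is nontrivial because `a ↦ T`, `b ↦ S T S⁻¹` sends `aⁿ` and `bⁿ` to
non-commuting unipotent matrices of `SL(2, ℤ)`.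

Every `wⁿ` is killed by the exponent sum of `a` modulo `n`, so this character factors through
`G = F₂/ⁿF₂`, where it is nontrivial as soon as `n ≠ 1`. Hence it is nontrivial on `g₁` or on `g₂`
for any generating pair. If it is nontrivial on `gᵢ = w ⁿF₂`, the exponent sum of `a` in `w` is
not divisible by `n`, so `wⁿ ∈ ⁿF₂`, i.e. `gᵢⁿ = 1`, and `[g₁ⁿ, g₂ⁿ] = 1`. -/

open scoped MatrixGroups in
open Matrix.SpecialLinearGroup ModularGroup in
lemma ModularGroup.T_zpow_mul_conj_T_zpow_ne {m k : ℤ} (hm : m ≠ 0) (hk : k ≠ 0) :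
    T ^ m * (S * T ^ k * S⁻¹) ≠ S * T ^ k * S⁻¹ * T ^ m := by
  intro h
  have h00 := congrArg (fun A : SL(2, ℤ) => (A : Matrix (Fin 2) (Fin 2) ℤ) 0 0) h
  simp [coe_T_zpow, S_inv, hm, hk] at h00

open ModularGroup in
theorem FreeGroup.commutatorElement_of_pow_of_pow_ne_one {α : Type*} [DecidableEq α] {i j : α}
    (hij : i ≠ j) {m k : ℕ} (hm : m ≠ 0) (hk : k ≠ 0) :
    ⁅FreeGroup.of i ^ m, FreeGroup.of j ^ k⁆ ≠ 1 := by
  intro h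
  have h' := congrArg
    (FreeGroup.lift fun x => if x = i then T else if x = j then S * T * S⁻¹ else 1) h
  rw [map_commutatorElement, _root_.map_one, commutatorElement_eq_one_iff_mul_comm] at h'
  simp only [map_pow, FreeGroup.lift_apply_of, if_true, if_neg hij.symm] at h'
  rw [conj_pow] at h'
  refine T_zpow_mul_conj_T_zpow_ne (m := m) (k := k) (mod_cast hm) (mod_cast hk) ?_
  simpa only [zpow_natCast] using h'

def expSumMod (n : ℕ) (i : Fin 2) : FreeGroup (Fin 2) →* Multiplicative (ZMod n) :=
  (AddMonoidHom.toMultiplicative (Int.castAddHom (ZMod n))).comp (expSum i)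

lemma expSumMod_eq_one_iff {n : ℕ} {i : Fin 2} {w : FreeGroup (Fin 2)} :
    expSumMod n i w = 1 ↔ (n : ℤ) ∣ (expSum i w).toAdd :=
  (ZMod.intCast_zmod_eq_zero_iff_dvd _ n)

lemma nF2_le_ker_expSumMod (n : ℕ) (i : Fin 2) : nF2 n ≤ (expSumMod n i).ker := by
  rw [nF2, Subgroup.closure_le]
  rintro _ ⟨w, -, rfl⟩
  rw [SetLike.mem_coe, MonoidHom.mem_ker, map_pow]
  apply Multiplicative.toAdd.injective
  rw [toAdd_pow, nsmul_eq_mul, ZMod.natCast_self, zero_mul, toAdd_one]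

namespace nF2

def quotientExpSumMod (n : ℕ) (i : Fin 2) :
    FreeGroup (Fin 2) ⧸ nF2 n →* Multiplicative (ZMod n) :=
  QuotientGroup.lift (nF2 n) (expSumMod n i) (nF2_le_ker_expSumMod n i)

lemma quotientExpSumMod_of_self (n : ℕ) (i : Fin 2) :
    quotientExpSumMod n i (FreeGroup.of i : FreeGroup (Fin 2) ⧸ nF2 n) =
      Multiplicative.ofAdd 1 := by
  simp [quotientExpSumMod, expSumMod, expSum]

lemma quotientExpSumMod_ne_one (n : ℕ) (hn : n ≠ 1) (i : Fin 2) :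
    quotientExpSumMod n i ≠ 1 := by
  intro h
  have h1 := quotientExpSumMod_of_self n i
  rw [h, MonoidHom.one_apply, eq_comm, ofAdd_eq_one, ZMod.one_eq_zero_iff] at h1
  exact hn h1

lemma pow_eq_one_of_quotientExpSumMod_ne_one {n : ℕ} {i : Fin 2}
    {g : FreeGroup (Fin 2) ⧸ nF2 n}
    (hg : quotientExpSumMod n i g ≠ 1) : g ^ n = 1 := by
  obtain ⟨w, rfl⟩ := QuotientGroup.mk_surjective g
  have hw : ¬ (n : ℤ) ∣ (expSum i w).toAdd := fun h => hg (expSumMod_eq_one_iff.mpr h)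
  have hpow : w ^ n ∈ nPowSet n := ⟨w, by fin_cases i <;> tauto, rfl⟩
  rw [← QuotientGroup.mk_pow, QuotientGroup.eq_one_iff]
  exact Subgroup.subset_closure hpow

end nF2

lemma MonoidHom.apply_ne_one_or_apply_ne_one {G M : Type*} [Group G] [Monoid M]
    {f : G →* M} (hf : f ≠ 1) {g₁ g₂ : G} (hgen : Subgroup.closure {g₁, g₂} = ⊤) :
    f g₁ ≠ 1 ∨ f g₂ ≠ 1 := by
  by_contra! h
  refine hf (MonoidHom.eq_of_eqOn_dense (f := f) (g := 1) hgen ?_)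
  rintro x (rfl | rfl)
  exacts [h.1, h.2]

/-- Let `n > 1` and `G = F₂/ⁿF₂`. The commutator `u = [x₁ⁿ, x₂ⁿ]` is a non-trivial element of
the free group `F₂` on `x₁, x₂`, and `u` is a 2-almost identity of `G`: for every pair
`(g₁, g₂)` of elements generating `G` one has `[g₁ⁿ, g₂ⁿ] = 1` in `G`. -/
theorem nF2_quotient_almost_identity (n : ℕ) (hn : 1 < n) :
    ⁅(FreeGroup.of (0 : Fin 2)) ^ n, (FreeGroup.of (1 : Fin 2)) ^ n⁆ ≠ 1 ∧
      ∀ g₁ g₂ : FreeGroup (Fin 2) ⧸ nF2 n,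
        Subgroup.closure {g₁, g₂} = ⊤ → ⁅g₁ ^ n, g₂ ^ n⁆ = 1 := by
  refine ⟨FreeGroup.commutatorElement_of_pow_of_pow_ne_one (by decide) (by omega) (by omega),
    fun g₁ g₂ hgen => ?_⟩
  rcases MonoidHom.apply_ne_one_or_apply_ne_one (nF2.quotientExpSumMod_ne_one n hn.ne' 0) hgen
    with h | h
  · rw [nF2.pow_eq_one_of_quotientExpSumMod_ne_one h, commutatorElement_one_left]
  · rw [nF2.pow_eq_one_of_quotientExpSumMod_ne_one h, commutatorElement_one_right]
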